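/- Define p_m = exp(m^{−1} Σ_{j=1}^{m} log j) (so p_m ~ m/e as m → ∞). For every Δ ∈ (0, 1/(2e)) and every C > 1 there exist ε ∈ (0, 0.1) and κ̄ ∈ (0, 1/4) such that for every fixed κ ∈ (0, κ̄] there is an integer m₀ with: for all m ≥ m₀, inf_{γ ∈ [1, C]} m^{−1} Σ_{j=⌊κm⌋}^{m} (j/p_m)^{γ} ≥ 1 + 2ε. -/

import Mathlib

/-!
Comparing `log m!` with `m log m - m` from both sides gives `p_m / m → 1/e`, so for large `m`
we have `m/8 ≤ p_m ≤ 3m/8`; in particular `⌊κm⌋ ≤ ⌈p_m⌉` for `κ ≤ 1/8`. For `γ ≥ 1`, every term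
with `j ≥ p_m` satisfies `(j/p_m)^γ ≥ j/p_m`, and these terms alone already sum to at least
`(m² - (p_m + 1)²) / (2 p_m) ≥ (55/48 - o(1)) m`, which exceeds `(1 + 2ε) m` for `ε = 1/40`.
-/

/-- Geometric mean of `1, …, m`: `p_m = exp(m⁻¹ ∑_{j=1}^m log j)` (so `p_m ~ m/e`). -/
noncomputable def pm (m : ℕ) : ℝ :=
  Real.exp ((m : ℝ)⁻¹ * ∑ j ∈ Finset.Icc 1 m, Real.log j)

open Real Finset Filter Topology
open scoped Nat

lemma sum_log_Icc_one_eq_log_factorial (m : ℕ) :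
    ∑ j ∈ Icc 1 m, log j = log (m ! : ℝ) := by
  rw [← Finset.prod_Ico_id_eq_factorial, Ico_add_one_right_eq_Icc, Nat.cast_prod, log_prod]
  intro j hj
  exact Nat.cast_ne_zero.mpr (by grind)

lemma log_factorial_le {m : ℕ} (hm : 1 ≤ m) :
    log (m ! : ℝ) ≤ m * log m - m + 1 + log m := by
  induction m, hm using Nat.le_induction with
  | base => simp
  | succ n hn ih =>
    have hn0 : (0 : ℝ) < n := by exact_mod_cast hn
    have hlog_ratio : log n - log (n + 1) ≤ n / (n + 1) - 1 := by
      rw [← log_div hn0.ne' (by positivity)]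
      exact log_le_sub_one_of_pos (by positivity)
    have hgap : ((n : ℝ) + 1) * (log n - log (n + 1)) ≤ -1 :=
      calc ((n : ℝ) + 1) * (log n - log (n + 1))
          ≤ (n + 1) * (n / (n + 1) - 1) := by gcongr
        _ = -1 := by field_simp; ring
    rw [Nat.factorial_succ, Nat.cast_mul, log_mul (by positivity) (by positivity)]
    push_cast
    nlinarith

lemma log_factorial_ge (m : ℕ) : m * log m - m ≤ log (m ! : ℝ) := by
  have hfac : (0 : ℝ) < m ! := by positivity
  rcases Nat.eq_zero_or_pos m with rfl | hm
  · simp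
  have h := pow_div_factorial_le_exp (m : ℝ) m.cast_nonneg m
  rw [div_le_iff₀ hfac, ← log_le_log_iff (by positivity) (by positivity), log_pow,
    log_mul (exp_pos _).ne' hfac.ne', log_exp] at h
  linarith

lemma pm_pos (m : ℕ) : 0 < pm m := exp_pos _

lemma log_pm (m : ℕ) : log (pm m) = (m : ℝ)⁻¹ * log (m ! : ℝ) := by
  rw [pm, log_exp, sum_log_Icc_one_eq_log_factorial]

lemma mul_exp_neg_one_le_pm (m : ℕ) : m * exp (-1) ≤ pm m := by
  rcases Nat.eq_zero_or_pos m with rfl | hm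
  · simp [pm]
  have hm0 : (0 : ℝ) < m := by exact_mod_cast hm
  rw [← log_le_log_iff (by positivity) (pm_pos m), log_pm, log_mul hm0.ne' (exp_pos _).ne',
    log_exp, le_inv_mul_iff₀ hm0]
  nlinarith [log_factorial_ge m]

lemma pm_le_mul_exp {m : ℕ} (hm : 1 ≤ m) : pm m ≤ m * exp (-1 + (1 + log m) / m) := by
  have hm0 : (0 : ℝ) < m := by exact_mod_cast hm
  rw [← log_le_log_iff (pm_pos m) (by positivity), log_pm, log_mul hm0.ne' (exp_pos _).ne',
    log_exp, inv_mul_le_iff₀ hm0, mul_add, mul_add, mul_div_cancel₀ _ hm0.ne']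
  linarith [log_factorial_le hm]

theorem tendsto_pm_div_self : Tendsto (fun m : ℕ => pm m / m) atTop (𝓝 (exp (-1))) := by
  have hlog : Tendsto (fun m : ℕ => (1 + log m) / m) atTop (𝓝 0) := by
    have hN := tendsto_natCast_atTop_atTop (R := ℝ)
    have := (tendsto_inv_atTop_zero.comp hN).add
      (isLittleO_log_id_atTop.tendsto_div_nhds_zero.comp hN)
    rw [add_zero] at this
    refine this.congr fun m => ?_
    simp only [Function.comp_apply, id, add_div, one_div]
  have hupper : Tendsto (fun m : ℕ => exp (-1 + (1 + log m) / m)) atTop (𝓝 (exp (-1))) := by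
    have := (continuous_exp.tendsto _).comp (hlog.const_add (-1))
    rwa [add_zero] at this
  refine tendsto_of_tendsto_of_tendsto_of_le_of_le' tendsto_const_nhds hupper ?_ ?_
  all_goals filter_upwards [eventually_ge_atTop 1] with m hm
  all_goals have hm0 : (0 : ℝ) < m := by exact_mod_cast hm
  · rw [le_div_iff₀ hm0, mul_comm]
    exact mul_exp_neg_one_le_pm m
  · rw [div_le_iff₀ hm0, mul_comm]
    exact pm_le_mul_exp hm

lemma sum_Icc_natCast_ge {a m : ℕ} (ham : a ≤ m) :
    ((m : ℝ) ^ 2 - (a : ℝ) ^ 2) / 2 ≤ ∑ j ∈ Icc a m, (j : ℝ) := by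
  induction m, ham using Nat.le_induction with
  | base => simp
  | succ n hn ih =>
    rw [sum_Icc_succ_top (by omega)]
    push_cast
    nlinarith

lemma sum_rpow_div_ge {P γ : ℝ} {b m : ℕ} (hP : 0 < P) (hγ : 1 ≤ γ) (hb : b ≤ ⌈P⌉₊)
    (hm : ⌈P⌉₊ ≤ m) :
    ((m : ℝ) ^ 2 - (P + 1) ^ 2) / (2 * P) ≤ ∑ j ∈ Icc b m, ((j : ℝ) / P) ^ γ := by
  have hceil : (⌈P⌉₊ : ℝ) < P + 1 := Nat.ceil_lt_add_one hP.le
  calc ((m : ℝ) ^ 2 - (P + 1) ^ 2) / (2 * P)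
      ≤ ((m : ℝ) ^ 2 - (⌈P⌉₊ : ℝ) ^ 2) / 2 / P := by
        rw [div_div]
        gcongr
    _ ≤ ∑ j ∈ Icc ⌈P⌉₊ m, (j : ℝ) / P := by
        rw [← sum_div]
        gcongr
        exact sum_Icc_natCast_ge hm
    _ ≤ ∑ j ∈ Icc ⌈P⌉₊ m, ((j : ℝ) / P) ^ γ := by
        refine sum_le_sum fun j hj => self_le_rpow_of_one_le ?_ hγ
        rw [one_le_div hP]
        exact (Nat.le_ceil P).trans (by exact_mod_cast (mem_Icc.mp hj).1)
    _ ≤ ∑ j ∈ Icc b m, ((j : ℝ) / P) ^ γ :=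
        sum_le_sum_of_subset_of_nonneg (Icc_subset_Icc_left hb)
          fun j _ _ => rpow_nonneg (by positivity) γ

theorem power_sum_lower_bound_positive_exponents_general (C : ℝ) :
    ∃ ε ∈ Set.Ioo (0 : ℝ) 0.1, ∃ κb ∈ Set.Ioo (0 : ℝ) (1/4),
      ∀ κ ∈ Set.Ioc (0 : ℝ) κb, ∃ m₀ : ℕ, ∀ m : ℕ, m₀ ≤ m →
        ∀ γ ∈ Set.Icc (1 : ℝ) C,
          1 + 2 * ε ≤ (m : ℝ)⁻¹ * ∑ j ∈ Finset.Icc ⌊κ * m⌋₊ m, ((j : ℝ) / pm m) ^ γ := by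
  have he : exp (-1) < 3 / 8 := by
    rw [exp_neg, inv_lt_comm₀ (exp_pos 1) (by norm_num)]
    linarith [exp_one_gt_d9]
  have he' : 1 / 8 ≤ exp (-1) := by
    rw [exp_neg, le_inv_comm₀ (by norm_num) (exp_pos 1)]
    linarith [exp_one_lt_d9]
  obtain ⟨m₀, hm₀⟩ := ((tendsto_pm_div_self.eventually (gt_mem_nhds he)).and
    (eventually_ge_atTop 20)).exists_forall_of_atTop
  refine ⟨1 / 40, by norm_num, 1 / 8, by norm_num, fun κ hκ => ⟨m₀, fun m hm γ hγ => ?_⟩⟩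
  obtain ⟨hpm, hm20⟩ := hm₀ m hm
  replace hm20 : (20 : ℝ) ≤ m := by exact_mod_cast hm20
  have hP0 := pm_pos m
  have hPm : pm m ≤ 3 / 8 * m := ((div_lt_iff₀ (by linarith)).mp hpm).le
  have hfloor : ⌊κ * m⌋₊ ≤ ⌈pm m⌉₊ := by
    refine (Nat.floor_le_floor ?_).trans (Nat.floor_le_ceil _)
    nlinarith [mul_exp_neg_one_le_pm m, hκ.1, hκ.2]
  have hceil : ⌈pm m⌉₊ ≤ m := Nat.ceil_le.mpr (by linarith)
  calc 1 + 2 * (1 / 40 : ℝ)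
      ≤ (m : ℝ)⁻¹ * (((m : ℝ) ^ 2 - (pm m + 1) ^ 2) / (2 * pm m)) := by
        rw [le_inv_mul_iff₀ (by linarith), le_div_iff₀ (by positivity)]
        nlinarith [mul_nonneg (sub_nonneg.mpr hPm) (by positivity : (0 : ℝ) ≤ pm m + 3 * m),
          mul_nonneg (sub_nonneg.mpr hm20) (by positivity : (0 : ℝ) ≤ m)]
    _ ≤ _ := by
        gcongr
        exact sum_rpow_div_ge hP0 hγ.1 hfloor hceil

/-- Lemma 5.5(b): for `Δ ∈ (0, 1/(2e))` and `C > 1` there are `ε ∈ (0, 0.1)` and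
`κ̄ ∈ (0, 1/4)` such that for every `κ ∈ (0, κ̄]` and all large `m`,
`inf_{γ ∈ [1, C]} m⁻¹ ∑_{j=⌊κm⌋}^m (j/p_m)^γ ≥ 1 + 2ε`. -/
theorem power_sum_lower_bound_positive_exponents (Δ C : ℝ)
    (hΔ : Δ ∈ Set.Ioo (0 : ℝ) (1 / (2 * Real.exp 1))) (hC : 1 < C) :
    ∃ ε ∈ Set.Ioo (0 : ℝ) 0.1, ∃ κb ∈ Set.Ioo (0 : ℝ) (1/4),
      ∀ κ ∈ Set.Ioc (0 : ℝ) κb, ∃ m₀ : ℕ, ∀ m : ℕ, m₀ ≤ m →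
        ∀ γ ∈ Set.Icc (1 : ℝ) C,
          1 + 2 * ε ≤ (m : ℝ)⁻¹ * ∑ j ∈ Finset.Icc ⌊κ * m⌋₊ m, ((j : ℝ) / pm m) ^ γ :=
  power_sum_lower_bound_positive_exponents_general C
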